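/- arXiv:2005.09706 — 7 statements merged into one kernel-verified Lean document; each statement's English description precedes it below -/
import Mathlib

section
/- Let q be a prime power, F the finite field with q² elements, and define F(x,y,z) = x^{q+1} − y^q·z − y·z^q on F³. Let ε be a nonzero element of F, and let (α,β,γ) and (λ,μ,ν) be nonzero vectors in F³ that are not proportional to each other and satisfy F(α,β,γ) = 0 and F(λ,μ,ν) = 0. Set ξ = −λ^q·α + μ^q·γ + ν^q·β, A = γμ−βν, B = αμ−βλ, C = γλ−αν, and let M be the 3×3 matrix over F with rows (ε·A^q, ε^{q+1}·ξ·λ, α), (ε·B^q, ε^{q+1}·ξ·μ, β), (ε·C^q, ε^{q+1}·ξ·ν, γ). Then for every (x,y,z) ∈ F³ one has F(M·(x,y,z)) = ε^{q+1}·F(A,B,C)·F(x,y,z); in particular M maps the zero set of F into itself. -/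
/-!
Let `σ` be the involution `t ↦ t ^ q` of `𝔽_{q²}` and `h(u, v) = u₀ σ(v₀) − u₁ σ(v₂) − u₂ σ(v₁)`
the Hermitian form with `h(v, v) = F(v)`. Put `a = (α, β, γ)`, `l = (λ, μ, ν)` and `w = (A, B, C)`.
The columns of `M` are `ε σ(w)`, `ε^{q+1} ξ l` and `a`, where `ξ = −h(a, l)`. As `w` is a cross
product of `a` and `l`, the vector `σ(w)` is `h`-orthogonal to both, and `a`, `l` are isotropic;
so `h(Mv, Mv)` retains only the diagonal term of the first column and the two cross terms between
`l` and `a`. The Lagrange-type identity `h(w, w) = h(a, l) h(l, a) − h(a, a) h(l, l) = ξ σ(ξ)`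
makes all three equal to `ε^{q+1} F(w)` times the matching terms of `F(v)`.
-/

def hermF (q : ℕ) {F : Type*} [Field F] (v : Fin 3 → F) : F :=
  v 0 ^ (q + 1) - v 1 ^ q * v 2 - v 1 * v 2 ^ q

def hermMat (q : ℕ) {F : Type*} [Field F] (ε α β γ lam μ ν : F) : Matrix (Fin 3) (Fin 3) F :=
  let ξ : F := -(lam ^ q * α) + μ ^ q * γ + ν ^ q * β
  !![ε * (γ * μ - β * ν) ^ q, ε ^ (q + 1) * ξ * lam, α;
     ε * (α * μ - β * lam) ^ q, ε ^ (q + 1) * ξ * μ, β;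
     ε * (γ * lam - α * ν) ^ q, ε ^ (q + 1) * ξ * ν, γ]

namespace Hermitian

variable {R : Type*} [CommRing R] (σ : R →+* R)

def hermForm (u v : Fin 3 → R) : R := u 0 * σ (v 0) - u 1 * σ (v 2) - u 2 * σ (v 1)

def hermCross (a l : Fin 3 → R) : Fin 3 → R :=
  ![a 2 * l 1 - a 1 * l 2, a 0 * l 1 - a 1 * l 0, a 2 * l 0 - a 0 * l 2]

variable {σ}

lemma hermForm_add_left (u u' v : Fin 3 → R) :
    hermForm σ (u + u') v = hermForm σ u v + hermForm σ u' v := by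
  simp only [hermForm, Pi.add_apply]; ring

lemma hermForm_add_right (u v v' : Fin 3 → R) :
    hermForm σ u (v + v') = hermForm σ u v + hermForm σ u v' := by
  simp only [hermForm, Pi.add_apply, map_add]; ring

lemma hermForm_smul_left (c : R) (u v : Fin 3 → R) :
    hermForm σ (c • u) v = c * hermForm σ u v := by
  simp only [hermForm, Pi.smul_apply, smul_eq_mul]; ring

lemma hermForm_smul_right (c : R) (u v : Fin 3 → R) :
    hermForm σ u (c • v) = σ c * hermForm σ u v := by
  simp only [hermForm, Pi.smul_apply, smul_eq_mul, map_mul]; ring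

lemma hermForm_swap (hσ : Function.Involutive σ) (u v : Fin 3 → R) :
    hermForm σ v u = σ (hermForm σ u v) := by
  simp only [hermForm, map_sub, map_mul, hσ _]; ring

lemma hermForm_self_conj (hσ : Function.Involutive σ) (u : Fin 3 → R) :
    σ (hermForm σ u u) = hermForm σ u u :=
  (hermForm_swap hσ u u).symm

lemma hermForm_comp_self (hσ : Function.Involutive σ) (u : Fin 3 → R) :
    hermForm σ (σ ∘ u) (σ ∘ u) = hermForm σ u u := by
  rw [← hermForm_self_conj hσ u]
  simp only [hermForm, Function.comp_apply, map_sub, map_mul]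

lemma hermForm_comp_hermCross_left (a l : Fin 3 → R) :
    hermForm σ (σ ∘ hermCross a l) a = 0 := by
  simp only [hermForm, hermCross, Function.comp_apply, Matrix.cons_val_zero, Matrix.cons_val_one,
    Matrix.cons_val_two, Matrix.head_cons, Matrix.tail_cons, map_sub, map_mul]
  ring

lemma hermForm_comp_hermCross_right (a l : Fin 3 → R) :
    hermForm σ (σ ∘ hermCross a l) l = 0 := by
  simp only [hermForm, hermCross, Function.comp_apply, Matrix.cons_val_zero, Matrix.cons_val_one,
    Matrix.cons_val_two, Matrix.head_cons, Matrix.tail_cons, map_sub, map_mul]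
  ring

lemma hermForm_hermCross_self (a l : Fin 3 → R) :
    hermForm σ (hermCross a l) (hermCross a l) =
      hermForm σ a l * hermForm σ l a - hermForm σ a a * hermForm σ l l := by
  simp only [hermForm, hermCross, Matrix.cons_val_zero, Matrix.cons_val_one, Matrix.cons_val_two,
    Matrix.head_cons, Matrix.tail_cons, map_sub, map_mul]
  ring

lemma hermForm_self_add_of_orthogonal {u₁ u₂ u₃ : Fin 3 → R}
    (h₁₂ : hermForm σ u₁ u₂ = 0) (h₁₃ : hermForm σ u₁ u₃ = 0)
    (h₂₁ : hermForm σ u₂ u₁ = 0) (h₃₁ : hermForm σ u₃ u₁ = 0)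
    (h₂₂ : hermForm σ u₂ u₂ = 0) (h₃₃ : hermForm σ u₃ u₃ = 0) (x y z : R) :
    hermForm σ (x • u₁ + y • u₂ + z • u₃) (x • u₁ + y • u₂ + z • u₃) =
      x * σ x * hermForm σ u₁ u₁ + y * σ z * hermForm σ u₂ u₃ + z * σ y * hermForm σ u₃ u₂ := by
  simp only [hermForm_add_left, hermForm_add_right, hermForm_smul_left, hermForm_smul_right,
    h₁₂, h₁₃, h₂₁, h₃₁, h₂₂, h₃₃]
  ring

end Hermitian

open Hermitian

section
variable {F : Type*} [Field F] {q : ℕ} {σ : F →+* F}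

lemma hermF_eq_hermForm (hσq : ∀ t, t ^ q = σ t) (v : Fin 3 → F) :
    hermF q v = hermForm σ v v := by
  simp only [hermF, hermForm, pow_succ, hσq]; ring

lemma hermMat_mulVec_eq (hσq : ∀ t, t ^ q = σ t) (ε α β γ lam μ ν x y z : F) :
    (hermMat q ε α β γ lam μ ν).mulVec ![x, y, z] =
      x • ε • (σ ∘ hermCross ![α, β, γ] ![lam, μ, ν])
        + y • (-(ε * σ ε * hermForm σ ![α, β, γ] ![lam, μ, ν])) • ![lam, μ, ν]
        + z • ![α, β, γ] := by
  ext i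
  fin_cases i <;>
  · simp only [hermMat, hermForm, hermCross, Matrix.mulVec, Matrix.vec3_dotProduct,
      Matrix.of_apply, Pi.add_apply, Pi.smul_apply, Function.comp_apply, smul_eq_mul,
      Matrix.cons_val', Matrix.cons_val_zero, Matrix.cons_val_one, Matrix.cons_val_two,
      Matrix.tail_cons, Matrix.cons_val_fin_one, Matrix.vecHead, Fin.isValue, Fin.zero_eta,
      Fin.mk_one, Fin.reduceFinMk, pow_succ, hσq, map_sub, map_mul]
    ring

theorem hermF_hermMat_mulVec (hσq : ∀ t, t ^ q = σ t) (hσ : Function.Involutive σ)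
    {ε α β γ lam μ ν : F} (h1 : hermF q ![α, β, γ] = 0) (h2 : hermF q ![lam, μ, ν] = 0)
    (x y z : F) :
    hermF q ((hermMat q ε α β γ lam μ ν).mulVec ![x, y, z])
      = ε ^ (q + 1) * hermF q ![γ * μ - β * ν, α * μ - β * lam, γ * lam - α * ν]
        * hermF q ![x, y, z] := by
  set a : Fin 3 → F := ![α, β, γ]
  set l : Fin 3 → F := ![lam, μ, ν]
  have hw : ![γ * μ - β * ν, α * μ - β * lam, γ * lam - α * ν] = hermCross a l := rfl
  rw [hermF_eq_hermForm hσq] at h1 h2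
  rw [hw, hermMat_mulVec_eq hσq, hermF_eq_hermForm hσq, hermF_eq_hermForm hσq,
    hermF_eq_hermForm hσq, pow_succ, hσq]
  set w := hermCross a l
  set c := -(ε * σ ε * hermForm σ a l)
  have hwa : hermForm σ (σ ∘ w) a = 0 := hermForm_comp_hermCross_left a l
  have hwl : hermForm σ (σ ∘ w) l = 0 := hermForm_comp_hermCross_right a l
  have haw : hermForm σ a (σ ∘ w) = 0 := by rw [hermForm_swap hσ, hwa, map_zero]
  have hlw : hermForm σ l (σ ∘ w) = 0 := by rw [hermForm_swap hσ, hwl, map_zero]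
  have hww : hermForm σ w w = hermForm σ a l * σ (hermForm σ a l) := by
    rw [hermForm_hermCross_self, h1, ← hermForm_swap hσ, zero_mul, sub_zero]
  rw [hermForm_self_add_of_orthogonal (u₁ := ε • (σ ∘ w)) (u₂ := c • l) (u₃ := a)]
  · simp only [hermForm_smul_left, hermForm_smul_right, hermForm_comp_self hσ, hww, c,
      ← hermForm_swap hσ a l, map_neg, map_mul, hσ _]
    simp only [hermForm, Matrix.cons_val_zero, Matrix.cons_val_one, Matrix.cons_val_two,
      Matrix.head_cons, Matrix.tail_cons]
    ring
  all_goals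
    simp only [hermForm_smul_left, hermForm_smul_right, hwa, hwl, haw, hlw, h1, h2, mul_zero]

end

theorem exists_involutive_ringHom_pow_eq {F : Type*} [Field F] [Fintype F] {q : ℕ}
    (hq : IsPrimePow q) (hcard : Fintype.card F = q ^ 2) :
    ∃ σ : F →+* F, (∀ t, t ^ q = σ t) ∧ Function.Involutive σ := by
  obtain ⟨p, k, hp, -, rfl⟩ := hq
  have := Fact.mk (Nat.prime_iff.mpr hp)
  have : CharP F p := charP_of_card_eq_prime_pow (hcard.trans (pow_mul p k 2).symm)
  refine ⟨iterateFrobenius F p k, fun t => rfl, fun t => ?_⟩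
  simp only [iterateFrobenius_def, ← pow_mul, ← sq, ← hcard, FiniteField.pow_card]

theorem hermMat_transforms_general (q : ℕ) (hq : IsPrimePow q) (F : Type*) [Field F] [Fintype F]
    (hcard : Fintype.card F = q ^ 2)
    (ε α β γ lam μ ν : F)
    (h1 : hermF q ![α, β, γ] = 0) (h2 : hermF q ![lam, μ, ν] = 0) :
    (∀ x y z : F,
        hermF q ((hermMat q ε α β γ lam μ ν).mulVec ![x, y, z])
          = ε ^ (q + 1)
            * hermF q ![γ * μ - β * ν, α * μ - β * lam, γ * lam - α * ν]
            * hermF q ![x, y, z]) ∧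
    (∀ v : Fin 3 → F, hermF q v = 0 → hermF q ((hermMat q ε α β γ lam μ ν).mulVec v) = 0) := by
  obtain ⟨σ, hσq, hσ⟩ := exists_involutive_ringHom_pow_eq hq hcard
  have key := hermF_hermMat_mulVec (ε := ε) hσq hσ h1 h2
  refine ⟨key, fun v hv => ?_⟩
  have hv3 : v = ![v 0, v 1, v 2] := by ext i; fin_cases i <;> rfl
  rw [hv3] at hv ⊢
  rw [key, hv, mul_zero]

/-- The matrix M transforms the Hermitian form by the factor ε^{q+1}·F(A,B,C);
in particular it maps the zero set of F into itself. -/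
theorem hermMat_transforms (q : ℕ) (hq : IsPrimePow q) (F : Type*) [Field F] [Fintype F]
    (hcard : Fintype.card F = q ^ 2)
    (ε α β γ lam μ ν : F) (hε : ε ≠ 0)
    (hv : ![α, β, γ] ≠ 0) (hw : ![lam, μ, ν] ≠ 0)
    (hprop : ∀ c : F, ![lam, μ, ν] ≠ c • ![α, β, γ])
    (h1 : hermF q ![α, β, γ] = 0) (h2 : hermF q ![lam, μ, ν] = 0) :
    (∀ x y z : F,
        hermF q ((hermMat q ε α β γ lam μ ν).mulVec ![x, y, z])
          = ε ^ (q + 1)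
            * hermF q ![γ * μ - β * ν, α * μ - β * lam, γ * lam - α * ν]
            * hermF q ![x, y, z]) ∧
    (∀ v : Fin 3 → F, hermF q v = 0 → hermF q ((hermMat q ε α β γ lam μ ν).mulVec v) = 0) :=
  hermMat_transforms_general q hq F hcard ε α β γ lam μ ν h1 h2
end

section
/- Let q be a prime power, F the finite field with q² elements, and S = {α ∈ F : α^{q+1} = α^q + α}. The map α ↦ α^q sends S to itself and is an involution on S (since α^{q²} = α), so its orbits on S are the sets {α, α^q} of size 1 or 2. The number of such orbits, i.e., the cardinality of the set { {α, α^q} : α ∈ S }, equals 1 + ⌈q/2⌉. -/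
/-!
Since `x ↦ x^q` is a ring endomorphism of `𝔽_{q²}`, `(α - 1)^(q+1) = (α^q - 1)(α - 1)`, so
`α ↦ α - 1` maps `S` bijectively onto the `(q+1)`-th roots of unity and `|S| = q + 1`. A root fixed
by the Frobenius satisfies `α² = 2α`, so the fixed roots are `0` and `2`, which coincide exactly in
characteristic `2`. An involution with `f` fixed points on a set of `n` elements has `(n + f) / 2`
orbits, and as `q + 1 + f` is even this number is `1 + ⌈q/2⌉` whether `f = 1` or `f = 2`.
-/

open Finset

namespace Function.Involutive

variable {α : Type*} {f : α → α}

theorem pair_eq_pair_iff (hf : Involutive f) {a b : α} :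
    ({b, f b} : Set α) = {a, f a} ↔ b = a ∨ b = f a := by
  rw [Set.pair_eq_pair_iff]
  constructor
  · rintro (⟨h, -⟩ | ⟨h, -⟩) <;> simp [h]
  · rintro (rfl | rfl)
    · exact Or.inl ⟨rfl, rfl⟩
    · exact Or.inr ⟨rfl, hf a⟩

theorem card_add_card_fixed_eq_two_mul_card_pairs [DecidableEq α] (hf : Involutive f)
    {s : Finset α} (hs : ∀ a ∈ s, f a ∈ s) :
    #s + #{a ∈ s | f a = a} = 2 * #(s.image fun a ↦ ({a, f a} : Set α)) := by
  set pair : α → Set α := fun a ↦ {a, f a}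
  have fiber : ∀ a ∈ s, {b ∈ s | pair b = pair a} = {a, f a} := by
    intro a ha
    ext b
    simp only [mem_filter, mem_insert, mem_singleton, pair, hf.pair_eq_pair_iff]
    constructor
    · exact And.right
    · rintro (rfl | rfl) <;> simp [ha, hs _ ha]
  have weight : ∀ a ∈ s, ∑ b ∈ {b ∈ s | pair b = pair a}, (if f b = b then 2 else 1) = 2 := by
    intro a ha
    rw [fiber a ha]
    by_cases h : f a = a
    · simp [h]
    · rw [sum_pair (Ne.symm h), hf a, if_neg h, if_neg (Ne.symm h)]
  calc #s + #{a ∈ s | f a = a} = ∑ a ∈ s, (if f a = a then 2 else 1) := by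
        rw [card_filter, card_eq_sum_ones, ← sum_add_distrib]
        exact sum_congr rfl fun a _ ↦ by split_ifs <;> rfl
    _ = ∑ t ∈ s.image pair, ∑ b ∈ {b ∈ s | pair b = t}, (if f b = b then 2 else 1) :=
        (sum_fiberwise_of_maps_to (fun a ha ↦ mem_image_of_mem pair ha) _).symm
    _ = ∑ t ∈ s.image pair, 2 := by
        refine sum_congr rfl fun t ht ↦ ?_
        obtain ⟨a, ha, rfl⟩ := mem_image.1 ht
        exact weight a ha
    _ = 2 * #(s.image pair) := by rw [sum_const, smul_eq_mul, mul_comm]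

end Function.Involutive

theorem FiniteField.exists_isPrimitiveRoot_of_dvd {K : Type*} [Field K] [Fintype K] {n : ℕ}
    (hn : n ∣ Fintype.card K - 1) : ∃ ζ : K, IsPrimitiveRoot ζ n := by
  obtain ⟨g, hg⟩ := IsCyclic.exists_ofOrder_eq_natCard (α := Kˣ)
  rw [Nat.card_units, Nat.card_eq_fintype_card] at hg
  obtain ⟨m, hm⟩ := hn
  have hpos : 0 < Fintype.card K - 1 := Nat.sub_pos_of_lt Fintype.one_lt_card
  exact ⟨(g ^ m : Kˣ), IsPrimitiveRoot.coe_units_iff.2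
    ((hg ▸ IsPrimitiveRoot.orderOf g).pow hpos (hm.trans (mul_comm n m)))⟩

namespace FiniteField

variable {F : Type*} [Field F] [Fintype F] {q : ℕ}

theorem one_lt_of_card_eq_sq (hcard : Fintype.card F = q ^ 2) : 1 < q :=
  lt_of_pow_lt_pow_left₀ 2 (Nat.zero_le q) (by simpa [hcard] using Fintype.one_lt_card (α := F))

theorem exists_ringHom_eq_pow_of_card_eq_sq (hcard : Fintype.card F = q ^ 2) :
    ∃ φ : F →+* F, ∀ x, φ x = x ^ q := by
  obtain ⟨n, hp, hn⟩ := FiniteField.card F (ringChar F)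
  obtain ⟨m, -, rfl⟩ := (Nat.dvd_prime_pow hp).1 ⟨q, by rw [← hn, hcard, sq]⟩
  have := ringChar.charP F
  have : Fact (ringChar F).Prime := ⟨hp⟩
  exact ⟨iterateFrobenius F (ringChar F) m, fun x ↦ iterateFrobenius_def _ _ x⟩

theorem pow_pow_of_card_eq_sq (hcard : Fintype.card F = q ^ 2) (x : F) : (x ^ q) ^ q = x := by
  rw [← pow_mul, ← sq, ← hcard, FiniteField.pow_card]

variable [DecidableEq F]

variable (F q) in
def hermitianRoots : Finset F :=
  {α | α ^ (q + 1) = α ^ q + α}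

theorem card_hermitianRoots (hcard : Fintype.card F = q ^ 2) :
    #(hermitianRoots F q) = q + 1 := by
  obtain ⟨φ, hφ⟩ := exists_ringHom_eq_pow_of_card_eq_sq hcard
  have hq := one_lt_of_card_eq_sq hcard
  obtain ⟨ζ, hζ⟩ := exists_isPrimitiveRoot_of_dvd (K := F) (n := q + 1)
    ⟨q - 1, by rw [hcard]; zify [hq.le, Nat.one_le_pow 2 q (by omega)]; ring⟩
  refine Eq.trans ?_ hζ.card_nthRootsFinset
  refine card_bij (fun α _ ↦ α - 1) ?_ (fun _ _ _ _ h ↦ sub_left_injective h) ?_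
  · intro α hα
    rw [Polynomial.mem_nthRootsFinset (by omega), pow_succ, ← hφ, map_sub, map_one, hφ]
    linear_combination (mem_filter.1 hα).2
  · intro β hβ
    rw [Polynomial.mem_nthRootsFinset (by omega), pow_succ, ← hφ] at hβ
    refine ⟨β + 1, mem_filter.2 ⟨mem_univ _, ?_⟩, add_sub_cancel_right β 1⟩
    rw [pow_succ, ← hφ, map_add, map_one]
    linear_combination hβ

theorem filter_hermitianRoots_pow_eq_self (hcard : Fintype.card F = q ^ 2) :
    {α ∈ hermitianRoots F q | α ^ q = α} = {0, 2} := by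
  obtain ⟨φ, hφ⟩ := exists_ringHom_eq_pow_of_card_eq_sq hcard
  have hq : q ≠ 0 := (one_lt_of_card_eq_sq hcard).ne_bot
  have two : (2 : F) ^ q = 2 := by rw [← hφ, map_ofNat]
  ext α
  simp only [hermitianRoots, mem_filter, mem_univ, true_and, mem_insert, mem_singleton]
  constructor
  · rintro ⟨hS, hfix⟩
    rw [pow_succ, hfix] at hS
    have : α * (α - 2) = 0 := by linear_combination hS
    rcases mul_eq_zero.1 this with h | h
    · exact Or.inl h
    · exact Or.inr (sub_eq_zero.1 h)
  · rintro (rfl | rfl)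
    · simp [hq]
    · rw [pow_succ, two]; constructor <;> ring

end FiniteField

open FiniteField in
theorem frobenius_orbits_general (q : ℕ) (F : Type*) [Field F] [Fintype F]
    (hcard : Fintype.card F = q ^ 2) :
    (∀ α : F, α ^ (q + 1) = α ^ q + α → (α ^ q) ^ (q + 1) = (α ^ q) ^ q + α ^ q) ∧
    (∀ α : F, (α ^ q) ^ q = α) ∧
    {s : Set F | ∃ α : F, α ^ (q + 1) = α ^ q + α ∧ s = {α, α ^ q}}.ncard
      = 1 + (q + 1) / 2 := by
  classical
  have involutive : Function.Involutive (· ^ q : F → F) := pow_pow_of_card_eq_sq hcard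
  have maps_to (α : F) (h : α ^ (q + 1) = α ^ q + α) :
      (α ^ q) ^ (q + 1) = (α ^ q) ^ q + α ^ q := by
    rw [pow_succ, pow_pow_of_card_eq_sq hcard α, mul_comm, ← pow_succ, h, add_comm]
  refine ⟨maps_to, involutive, ?_⟩
  have orbits : {s : Set F | ∃ α : F, α ^ (q + 1) = α ^ q + α ∧ s = {α, α ^ q}} =
      ↑((hermitianRoots F q).image fun α ↦ ({α, α ^ q} : Set F)) := by
    ext s
    simp [hermitianRoots, eq_comm]
  have count := involutive.card_add_card_fixed_eq_two_mul_card_pairs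
    (s := hermitianRoots F q) (by simpa [hermitianRoots] using maps_to)
  rw [card_hermitianRoots hcard, filter_hermitianRoots_pow_eq_self hcard] at count
  have fixed_pos : 0 < #({0, 2} : Finset F) := card_pos.2 (insert_nonempty _ _)
  have fixed_le : #({0, 2} : Finset F) ≤ 2 := card_le_two
  rw [orbits, Set.ncard_coe_finset]
  omega

/-- The q-power Frobenius is an involution on the set S of roots of
t^{q+1} − t^q − t in 𝔽_{q²}, and its orbits {α, α^q} number 1 + ⌈q/2⌉. -/
theorem frobenius_orbits (q : ℕ) (hq : IsPrimePow q) (F : Type*) [Field F] [Fintype F]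
    (hcard : Fintype.card F = q ^ 2) :
    (∀ α : F, α ^ (q + 1) = α ^ q + α → (α ^ q) ^ (q + 1) = (α ^ q) ^ q + α ^ q) ∧
    (∀ α : F, (α ^ q) ^ q = α) ∧
    {s : Set F | ∃ α : F, α ^ (q + 1) = α ^ q + α ∧ s = {α, α ^ q}}.ncard
      = 1 + (q + 1) / 2 :=
  frobenius_orbits_general q F hcard
end

section
/- Let q ≥ 2 be an integer, m = q+1, g = q(q−1)/2, and let d be a positive divisor of q+1. Extend σ_d to a function σ̃_d on all pairs of integers by the rule σ̃_d(i + s·m, j + t·m) = σ_d(i,j) − s·m − t·m for 0 ≤ i,j ≤ q and s,t ∈ ℤ (every pair of integers is such a shift of a unique pair with 0 ≤ i,j ≤ q). Then for all integers i, j: σ̃_d(i,j) + σ̃_d(2m−i, m+1−j) = 2g − 1 − 3m = q² − 4q − 4. -/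
/-!
Write `m = q + 1`. On the shifted fundamental domain `0 ≤ i ≤ m`, `1 ≤ j ≤ m` the extension
`σ̃_d` is given by one closed formula: the column `j = 0` reappears as `j = m` and the row
`i = 0` as `i = m`, and the piecewise definition of `σ_d` becomes uniform there. The involution
`(i, j) ↦ (m - i, m + 1 - j)` preserves this domain, swaps `[i < j]` with `1 - [i < j]`, and,
since `d ∣ m`, negates the `ε`-term, so the formula sums to `q² - 3q - 3` over a pair of mirror
points. Reducing `(i, j)` into the domain by multiples of `m` moves `(2m - i, m + 1 - j)` onto the
mirror point by the complementary multiples, and the shifts add up to exactly one `m`.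
-/

/-- ε_d(i,j): the correction term in the discrepancy function of a Hermitian
triangle of type `d`. -/
def epsFn (q d i j : ℤ) : ℤ :=
  if ¬ d ∣ i ∧ j = i then 1
  else if ¬ d ∣ i ∧ (j = i + 1 ∨ (i = q ∧ j = 0)) then -1
  else 0

/-- σ_d(i,j): the two-point discrepancy function of a Hermitian triangle of
type `d`, for 0 ≤ i,j ≤ q. -/
def sigmaFn (q d i j : ℤ) : ℤ :=
  if j = 0 then epsFn q d i j
  else (q - 2) * (q + 1) - j * q + (if i < j then q + 1 else 0) + epsFn q d i j

/-- s_d(i,j,k) = ⌊(σ_d(i,j) − k − 1)/(q+1)⌋. -/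
def sFn (q d i j k : ℤ) : ℤ := Int.fdiv (sigmaFn q d i j - k - 1) (q + 1)

/-- C(s+3, 3) as an integer (equal to 0 when s+3 < 3). -/
def ch3 (s : ℤ) : ℤ := ((s + 3).toNat.choose 3 : ℤ)

def epsClosed (d i j : ℤ) : ℤ :=
  if d ∣ i then 0 else (if j = i then 1 else 0) - (if j = i + 1 then 1 else 0)

/-- The values of `σ̃_d` on `0 ≤ i ≤ q + 1`, `1 ≤ j ≤ q + 1`. -/
def sigmaClosed (q d i j : ℤ) : ℤ :=
  (q - 2) * (q + 1) - j * q + (if i < j then q + 1 else 0) + epsClosed d i j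

theorem epsClosed_reflect {q d : ℤ} (hdvd : d ∣ q + 1) (i j : ℤ) :
    epsClosed d (q + 1 - i) (q + 1 + 1 - j) = -epsClosed d i j := by
  unfold epsClosed
  simp only [dvd_sub_right hdvd]
  split_ifs <;> omega

theorem sigmaClosed_add_sigmaClosed_reflect {q d : ℤ} (hdvd : d ∣ q + 1) (i j : ℤ) :
    sigmaClosed q d i j + sigmaClosed q d (q + 1 - i) (q + 1 + 1 - j) = q ^ 2 - 3 * q - 3 := by
  unfold sigmaClosed
  rw [epsClosed_reflect hdvd]
  split_ifs <;> first | (exfalso; omega) | ring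

theorem sigmaFn_eq_sigmaClosed {q d i j : ℤ} (hj : 1 ≤ j) :
    sigmaFn q d i j = sigmaClosed q d i j := by
  have hdvd_of_eq_zero : i = 0 → d ∣ i := by rintro rfl; exact dvd_zero d
  unfold sigmaFn sigmaClosed epsFn epsClosed
  by_cases hdi : d ∣ i <;> simp only [hdi] <;> grind

theorem sigmaFn_zero_eq_sigmaClosed {q d i : ℤ} (hi : 0 ≤ i) (hiq : i ≤ q) :
    sigmaFn q d i 0 = sigmaClosed q d i (q + 1) + (q + 1) := by
  have hdvd_of_eq_zero : i = 0 → d ∣ i := by rintro rfl; exact dvd_zero d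
  unfold sigmaFn sigmaClosed epsFn epsClosed
  by_cases hdi : d ∣ i <;> simp only [hdi] <;> grind

theorem sigmaClosed_zero_left {q d j : ℤ} (hdvd : d ∣ q + 1) (hj : 1 ≤ j) (hjq : j ≤ q + 1) :
    sigmaClosed q d 0 j = sigmaClosed q d (q + 1) j + (q + 1) := by
  unfold sigmaClosed epsClosed
  simp only [dvd_zero, hdvd]
  grind

theorem sigt_add_mul_eq_sigmaClosed {q d : ℤ} (hdvd : d ∣ q + 1) {sigt : ℤ → ℤ → ℤ}
    (hshift : ∀ i j s t : ℤ, 0 ≤ i → i ≤ q → 0 ≤ j → j ≤ q →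
      sigt (i + s * (q + 1)) (j + t * (q + 1)) = sigmaFn q d i j - s * (q + 1) - t * (q + 1))
    {i j : ℤ} (hi : 0 ≤ i) (hiq : i ≤ q + 1) (hj : 1 ≤ j) (hjq : j ≤ q + 1) (s t : ℤ) :
    sigt (i + s * (q + 1)) (j + t * (q + 1)) = sigmaClosed q d i j - (s + t) * (q + 1) := by
  rcases hiq.lt_or_eq with hiq | rfl <;> rcases hjq.lt_or_eq with hjq | rfl
  · rw [hshift i j s t hi (by omega) (by omega) (by omega), sigmaFn_eq_sigmaClosed hj]
    ring
  · rw [show q + 1 + t * (q + 1) = 0 + (t + 1) * (q + 1) by ring,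
      hshift i 0 s (t + 1) hi (by omega) le_rfl (by omega),
      sigmaFn_zero_eq_sigmaClosed hi (by omega)]
    ring
  · rw [show q + 1 + s * (q + 1) = 0 + (s + 1) * (q + 1) by ring,
      hshift 0 j (s + 1) t le_rfl (by omega) (by omega) (by omega),
      sigmaFn_eq_sigmaClosed hj, sigmaClosed_zero_left hdvd hj (by omega)]
    ring
  · rw [show q + 1 + s * (q + 1) = 0 + (s + 1) * (q + 1) by ring,
      show q + 1 + t * (q + 1) = 0 + (t + 1) * (q + 1) by ring,
      hshift 0 0 (s + 1) (t + 1) le_rfl (by omega) le_rfl (by omega),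
      sigmaFn_zero_eq_sigmaClosed le_rfl (by omega), sigmaClosed_zero_left hdvd (by omega) le_rfl]
    ring

theorem sigma_duality_general (q d : ℤ) (hq : 2 ≤ q) (hdvd : d ∣ q + 1)
    (sigt : ℤ → ℤ → ℤ)
    (hshift : ∀ i j s t : ℤ, 0 ≤ i → i ≤ q → 0 ≤ j → j ≤ q →
      sigt (i + s * (q + 1)) (j + t * (q + 1)) = sigmaFn q d i j - s * (q + 1) - t * (q + 1)) :
    ∀ i j : ℤ,
      sigt i j + sigt (2 * (q + 1) - i) ((q + 1) + 1 - j) = q ^ 2 - 4 * q - 4 := by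
  intro i j
  have hm : (0 : ℤ) < q + 1 := by omega
  obtain ⟨s, hs, -⟩ := existsUnique_sub_zsmul_mem_Ico hm i 0
  obtain ⟨t, ht, -⟩ := existsUnique_sub_zsmul_mem_Ico hm j 1
  simp only [Set.mem_Ico, smul_eq_mul] at hs ht
  obtain ⟨i₀, rfl⟩ : ∃ i₀, i = i₀ + s * (q + 1) := ⟨_, (sub_add_cancel i _).symm⟩
  obtain ⟨j₀, rfl⟩ : ∃ j₀, j = j₀ + t * (q + 1) := ⟨_, (sub_add_cancel j _).symm⟩
  simp only [add_sub_cancel_right] at hs ht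
  rw [sigt_add_mul_eq_sigmaClosed hdvd hshift hs.1 (by omega) ht.1 (by omega),
    show 2 * (q + 1) - (i₀ + s * (q + 1)) = q + 1 - i₀ + (1 - s) * (q + 1) by ring,
    show q + 1 + 1 - (j₀ + t * (q + 1)) = q + 1 + 1 - j₀ + -t * (q + 1) by ring,
    sigt_add_mul_eq_sigmaClosed hdvd hshift (by omega) (by omega) (by omega) (by omega)]
  linear_combination sigmaClosed_add_sigmaClosed_reflect hdvd i₀ j₀

/-- Duality for the extended discrepancy function:
σ̃_d(i,j) + σ̃_d(2m−i, m+1−j) = 2g − 1 − 3m = q² − 4q − 4. -/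
theorem sigma_duality (q d : ℤ) (hq : 2 ≤ q) (hd : 0 < d) (hdvd : d ∣ q + 1)
    (sigt : ℤ → ℤ → ℤ)
    (hshift : ∀ i j s t : ℤ, 0 ≤ i → i ≤ q → 0 ≤ j → j ≤ q →
      sigt (i + s * (q + 1)) (j + t * (q + 1)) = sigmaFn q d i j - s * (q + 1) - t * (q + 1)) :
    ∀ i j : ℤ,
      sigt i j + sigt (2 * (q + 1) - i) ((q + 1) + 1 - j) = q ^ 2 - 4 * q - 4 :=
  sigma_duality_general q d hq hdvd sigt hshift
end

section
/- Let q ≥ 2 be an integer and d a positive divisor of q+1. For integers 0 ≤ i,j,k ≤ q, if s_1(i,j,k) ≠ s_d(i,j,k), then exactly one of the following holds: (1) (i,j,k) = (q,0,q), in which case s_1(i,j,k) = −1 and s_d(i,j,k) = −2 (this requires d > 1); (2) j = i+1, k = i, and d ∤ i, in which case s_d(i,j,k) = s_1(i,j,k) − 1; (3) i = j = k and d ∤ i, in which case s_d(i,j,k) = s_1(i,j,k) + 1. -/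
namespace Int

theorem add_one_ediv_of_dvd {a n : ℤ} (hn : 0 < n) (h : n ∣ a + 1) :
    (a + 1) / n = a / n + 1 := by
  obtain ⟨c, hc⟩ := h
  have ha : a / n = c - 1 := (Int.ediv_eq_iff_of_pos hn).mpr ⟨by linarith, by linarith⟩
  rw [ha, hc, Int.mul_ediv_cancel_left _ hn.ne', sub_add_cancel]

theorem add_one_ediv_of_not_dvd {a n : ℤ} (hn : 0 < n) (h : ¬ n ∣ a + 1) :
    (a + 1) / n = a / n := by
  have hlt : a + 1 < a / n * n + n := by
    have hle : a + 1 ≤ (a / n + 1) * n := lt_ediv_add_one_mul_self a hn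
    exact lt_of_le_of_ne (by linarith) fun heq => h ⟨a / n + 1, by linarith⟩
  exact (Int.ediv_eq_iff_of_pos hn).mpr ⟨by linarith [Int.ediv_mul_le a hn.ne'], hlt⟩

theorem eq_of_dvd_sub_of_lt {n x y : ℤ} (h : n ∣ x - y) (hx : 0 ≤ x) (hxn : x < n)
    (hy : 0 ≤ y) (hyn : y < n) : x = y :=
  sub_eq_zero.mp <| eq_zero_of_abs_lt_dvd h <| abs_sub_lt_iff.mpr ⟨by omega, by omega⟩

end Int

theorem epsFn_one (q i j : ℤ) : epsFn q 1 i j = 0 := by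
  simp [epsFn]

theorem epsFn_cases (q d i j : ℤ) :
    epsFn q d i j = 0 ∨ (¬ d ∣ i ∧ j = i ∧ epsFn q d i j = 1) ∨
      (¬ d ∣ i ∧ (j = i + 1 ∨ i = q ∧ j = 0) ∧ epsFn q d i j = -1) := by
  unfold epsFn
  split_ifs <;> simp_all

theorem sigmaFn_eq_sigmaFn_one_add_epsFn (q d i j : ℤ) :
    sigmaFn q d i j = sigmaFn q 1 i j + epsFn q d i j := by
  unfold sigmaFn
  rw [epsFn_one]
  split_ifs <;> ring

theorem sigmaFn_one_modEq (q i j : ℤ) : sigmaFn q 1 i j ≡ j [ZMOD q + 1] := by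
  rw [sigmaFn, epsFn_one]
  split_ifs with hj hij
  · rw [hj]
  · exact Int.modEq_iff_add_fac.mpr ⟨j - q + 1, by ring⟩
  · exact Int.modEq_iff_add_fac.mpr ⟨j - q + 2, by ring⟩

theorem sigmaFn_one_zero (q i : ℤ) : sigmaFn q 1 i 0 = 0 := by
  simp [sigmaFn, epsFn_one]

section

variable {q d i j k : ℤ}

theorem sFn_eq_ediv (hq : 0 ≤ q) :
    sFn q d i j k = (sigmaFn q 1 i j - k - 1 + epsFn q d i j) / (q + 1) := by
  rw [sFn, Int.fdiv_eq_ediv_of_nonneg _ (by omega), sigmaFn_eq_sigmaFn_one_add_epsFn]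
  ring_nf

theorem sFn_one_zero (hq : 0 ≤ q) (hk : 0 ≤ k) (hk' : k ≤ q) : sFn q 1 i 0 k = -1 := by
  rw [sFn_eq_ediv hq, sigmaFn_one_zero, epsFn_one, Int.ediv_eq_iff_of_pos (by omega)]
  constructor <;> linarith

theorem sFn_eq_of_epsFn_eq_zero (hq : 0 ≤ q) (h : epsFn q d i j = 0) :
    sFn q d i j k = sFn q 1 i j k := by
  rw [sFn_eq_ediv hq, sFn_eq_ediv hq, h, epsFn_one]

theorem sFn_eq_add_one_of_epsFn_eq_one (hq : 0 ≤ q) (h : epsFn q d i j = 1)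
    (hne : sFn q 1 i j k ≠ sFn q d i j k) :
    q + 1 ∣ sigmaFn q 1 i j - k ∧ sFn q d i j k = sFn q 1 i j k + 1 := by
  have hn : 0 < q + 1 := by omega
  rw [sFn_eq_ediv hq, sFn_eq_ediv hq, h, epsFn_one, add_zero] at *
  have hdvd : q + 1 ∣ sigmaFn q 1 i j - k - 1 + 1 :=
    by_contra fun hnd => hne (Int.add_one_ediv_of_not_dvd hn hnd).symm
  exact ⟨by simpa using hdvd, Int.add_one_ediv_of_dvd hn hdvd⟩

theorem sFn_eq_sub_one_of_epsFn_eq_neg_one (hq : 0 ≤ q) (h : epsFn q d i j = -1)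
    (hne : sFn q 1 i j k ≠ sFn q d i j k) :
    q + 1 ∣ sigmaFn q 1 i j - k - 1 ∧ sFn q d i j k = sFn q 1 i j k - 1 := by
  have hn : 0 < q + 1 := by omega
  rw [sFn_eq_ediv hq, sFn_eq_ediv hq, h, epsFn_one, add_zero, ← sub_eq_add_neg] at *
  set a := sigmaFn q 1 i j - k - 1
  have hdvd : q + 1 ∣ a - 1 + 1 :=
    by_contra fun hnd => hne (by rw [← Int.add_one_ediv_of_not_dvd hn hnd, sub_add_cancel])
  refine ⟨by simpa using hdvd, ?_⟩
  rw [← sub_add_cancel a 1, Int.add_one_ediv_of_dvd hn hdvd, sub_add_cancel, add_sub_cancel_right]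

end

theorem s1_ne_sd_general (q d : ℤ) (hd : 0 < d)
    (i j k : ℤ) (hi : 0 ≤ i) (hi' : i ≤ q)
    (hk : 0 ≤ k) (hk' : k ≤ q)
    (hne : sFn q 1 i j k ≠ sFn q d i j k) :
    (i = q ∧ j = 0 ∧ k = q ∧ 1 < d ∧ sFn q 1 i j k = -1 ∧ sFn q d i j k = -2) ∨
    (j = i + 1 ∧ k = i ∧ ¬ d ∣ i ∧ sFn q d i j k = sFn q 1 i j k - 1) ∨
    (i = j ∧ j = k ∧ ¬ d ∣ i ∧ sFn q d i j k = sFn q 1 i j k + 1) := by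
  have hq0 : 0 ≤ q := hk.trans hk'
  rcases epsFn_cases q d i j with h0 | ⟨hdi, hji, h1⟩ | ⟨hdi, hji | ⟨hiq, hj0⟩, h1⟩
  · exact absurd (sFn_eq_of_epsFn_eq_zero hq0 h0).symm hne
  · subst j
    obtain ⟨hdvd, hs⟩ := sFn_eq_add_one_of_epsFn_eq_one hq0 h1 hne
    rw [((sigmaFn_one_modEq q i i).sub_right k).dvd_iff] at hdvd
    have hik : i = k := Int.eq_of_dvd_sub_of_lt hdvd hi (by omega) hk (by omega)
    exact Or.inr (Or.inr ⟨rfl, hik, hdi, hs⟩)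
  · subst j
    obtain ⟨hdvd, hs⟩ := sFn_eq_sub_one_of_epsFn_eq_neg_one hq0 h1 hne
    rw [sub_sub, ((sigmaFn_one_modEq q i (i + 1)).sub_right (k + 1)).dvd_iff,
      add_sub_add_right_eq_sub] at hdvd
    have hik : i = k := Int.eq_of_dvd_sub_of_lt hdvd hi (by omega) hk (by omega)
    exact Or.inr (Or.inl ⟨rfl, hik.symm, hdi, hs⟩)
  · subst i j
    obtain ⟨hdvd, hs⟩ := sFn_eq_sub_one_of_epsFn_eq_neg_one hq0 h1 hne
    rw [sigmaFn_one_zero] at hdvd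
    have hqk : q + 1 ∣ q - k := by
      simpa [neg_add_eq_sub] using dvd_add hdvd (dvd_refl (q + 1))
    have hkq : q = k := Int.eq_of_dvd_sub_of_lt hqk hq0 (by omega) hk (by omega)
    have hd1 : d ≠ 1 := by
      rintro rfl
      exact hdi (one_dvd q)
    have hs1 : sFn q 1 q 0 k = -1 := sFn_one_zero hq0 hk hk'
    exact Or.inl ⟨rfl, rfl, hkq.symm, by omega, hs1, by rw [hs, hs1]; norm_num⟩

/-- Classification of the triples where s₁ and s_d differ. -/
theorem s1_ne_sd (q d : ℤ) (hq : 2 ≤ q) (hd : 0 < d) (hdvd : d ∣ q + 1)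
    (i j k : ℤ) (hi : 0 ≤ i) (hi' : i ≤ q) (hj : 0 ≤ j) (hj' : j ≤ q)
    (hk : 0 ≤ k) (hk' : k ≤ q)
    (hne : sFn q 1 i j k ≠ sFn q d i j k) :
    (i = q ∧ j = 0 ∧ k = q ∧ 1 < d ∧ sFn q 1 i j k = -1 ∧ sFn q d i j k = -2) ∨
    (j = i + 1 ∧ k = i ∧ ¬ d ∣ i ∧ sFn q d i j k = sFn q 1 i j k - 1) ∨
    (i = j ∧ j = k ∧ ¬ d ∣ i ∧ sFn q d i j k = sFn q 1 i j k + 1) :=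
  s1_ne_sd_general q d hd i j k hi hi' hk hk' hne
end

section
/- Let q > 3 be an integer and let d and e be distinct positive divisors of q+1. Then e·(d−1)·(2q² − 5q + 5 − d) ≠ d·(e−1)·(2q² − 5q + 5 − e). Equivalently, the rational numbers h_d(q) = (d−1)(q+1)(2q²−5q+5−d)/(12d) and h_e(q) = (e−1)(q+1)(2q²−5q+5−e)/(12e) are distinct; the key points are that equality would force d·e = 2q² − 5q + 5, while distinct divisors of q+1 satisfy d·e ≤ (q+1)²/2 < 2q² − 5q + 5 for q > 3. -/
/-!
Cross-multiplying, `e (d - 1) (M - d) - d (e - 1) (M - e) = (d - e) (M - d e)` with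
`M = 2q² - 5q + 5`, so equality forces `d = e` or `d e = M`. But a smaller divisor of `q + 1`
is a proper one, hence at most `(q + 1) / 2`, so `2 d e ≤ (q + 1)² < 2 M` once `q > 3`.
-/

lemma Int.two_mul_le_of_dvd_of_lt {d n : ℤ} (hd : 0 < d) (hdvd : d ∣ n) (hlt : d < n) :
    2 * d ≤ n := by
  obtain ⟨k, rfl⟩ := hdvd
  have hk : 2 ≤ k := by nlinarith
  nlinarith

lemma Int.two_mul_mul_le_sq_of_dvd_of_ne {d e n : ℤ} (hn : 0 < n) (hd : 0 < d) (he : 0 < e)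
    (hdn : d ∣ n) (hen : e ∣ n) (hne : d ≠ e) : 2 * (d * e) ≤ n ^ 2 := by
  have hdle : d ≤ n := Int.le_of_dvd hn hdn
  have hele : e ≤ n := Int.le_of_dvd hn hen
  rcases hne.lt_or_gt with hlt | hlt
  · have := Int.two_mul_le_of_dvd_of_lt hd hdn (hlt.trans_le hele)
    nlinarith
  · have := Int.two_mul_le_of_dvd_of_lt he hen (hlt.trans_le hdle)
    nlinarith

lemma mul_sub_one_mul_sub_eq_iff {R : Type*} [CommRing R] [NoZeroDivisors R] {d e M : R} :
    e * (d - 1) * (M - d) = d * (e - 1) * (M - e) ↔ d = e ∨ d * e = M := by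
  have hfactor : e * (d - 1) * (M - d) - d * (e - 1) * (M - e) = (d - e) * (M - d * e) := by ring
  rw [← sub_eq_zero, hfactor, mul_eq_zero, sub_eq_zero, sub_eq_zero, eq_comm (a := M)]

lemma sub_one_mul_mul_sub_div_eq_iff {K : Type*} [Field K] {k c d e M : K} (hk : k ≠ 0)
    (hc : c ≠ 0) (hd : d ≠ 0) (he : e ≠ 0) :
    (d - 1) * c * (M - d) / (k * d) = (e - 1) * c * (M - e) / (k * e) ↔
      e * (d - 1) * (M - d) = d * (e - 1) * (M - e) := by
  rw [div_eq_div_iff (mul_ne_zero hk hd) (mul_ne_zero hk he)]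
  constructor
  · intro h
    exact mul_left_cancel₀ (mul_ne_zero hk hc) (by linear_combination h)
  · intro h
    linear_combination k * c * h

/-- For q > 3, distinct divisors d, e of q+1 give distinct gap-count corrections:
e(d−1)(2q²−5q+5−d) ≠ d(e−1)(2q²−5q+5−e), equivalently h_d(q) ≠ h_e(q). -/
theorem distinct_divisors_distinct_h (q d e : ℤ) (hq : 3 < q)
    (hd : 0 < d) (he : 0 < e) (hdvd : d ∣ q + 1) (hevd : e ∣ q + 1) (hne : d ≠ e) :
    e * (d - 1) * (2 * q ^ 2 - 5 * q + 5 - d) ≠ d * (e - 1) * (2 * q ^ 2 - 5 * q + 5 - e) ∧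
    ((d : ℚ) - 1) * ((q : ℚ) + 1) * (2 * (q : ℚ) ^ 2 - 5 * (q : ℚ) + 5 - (d : ℚ)) / (12 * (d : ℚ))
      ≠ ((e : ℚ) - 1) * ((q : ℚ) + 1) * (2 * (q : ℚ) ^ 2 - 5 * (q : ℚ) + 5 - (e : ℚ)) / (12 * (e : ℚ)) := by
  have hsq := Int.two_mul_mul_le_sq_of_dvd_of_ne (by linarith) hd he hdvd hevd hne
  have hlt : d * e < 2 * q ^ 2 - 5 * q + 5 := by nlinarith
  have hltℚ : (d : ℚ) * e < 2 * (q : ℚ) ^ 2 - 5 * q + 5 := by exact_mod_cast hlt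
  have hqℚ : (q : ℚ) + 1 ≠ 0 := by
    have : (3 : ℚ) < q := by exact_mod_cast hq
    positivity
  constructor
  · rw [Ne, mul_sub_one_mul_sub_eq_iff]
    rintro (h | h)
    exacts [hne h, hlt.ne h]
  · rw [Ne, sub_one_mul_mul_sub_div_eq_iff (by norm_num) hqℚ (by positivity) (by positivity),
      mul_sub_one_mul_sub_eq_iff]
    rintro (h | h)
    exacts [hne (by exact_mod_cast h), hltℚ.ne h]
end

section
/- Let q ≥ 1 be an integer and d a positive divisor of q+1. Then 12·d · Σ_{i=0, d ∤ i}^{q} C(q−i, 2) = (d−1)(q+1)(2q² − 5q + 5 − d), where the sum runs over those integers i with 0 ≤ i ≤ q that are not divisible by d, and C(n,2) = n(n−1)/2 denotes a binomial coefficient (equal to 0 for n < 2). -/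
/-! Write `q + 1 = d * m`. The multiples of `d` in `[0, q]` are the `d * j` with `j < m`, and
`q - d * j = d * (m - j) - 1`, so their part of the sum is `∑_{j=1}^{m} C(d * j - 1, 2)`, a polynomial
in `d` and `m` computed by induction on `m`. The case `d = 1` gives the sum over all of `[0, q]`,
and the theorem is the difference of the two closed forms. -/

open Finset

lemma two_mul_choose_two_toNat {n : ℤ} (hn : 0 ≤ n) :
    2 * (n.toNat.choose 2 : ℤ) = n * (n - 1) := by
  lift n to ℕ using hn
  rw [Int.toNat_natCast]
  qify
  rw [Nat.cast_choose_two]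
  ring

lemma filter_dvd_Icc_zero_mul_sub_one {d : ℤ} (hd : 0 < d) (m : ℕ) :
    (Icc 0 (d * m - 1)).filter (d ∣ ·) = (range m).image (fun j : ℕ => d * j) := by
  ext i
  simp only [mem_filter, mem_Icc, mem_image, mem_range]
  constructor
  · rintro ⟨⟨hi0, him⟩, j, rfl⟩
    lift j to ℕ using nonneg_of_mul_nonneg_right hi0 hd
    exact ⟨j, by exact_mod_cast (lt_of_mul_lt_mul_left (by linarith) hd.le : (j : ℤ) < m), rfl⟩
  · rintro ⟨j, hj, rfl⟩
    have : (j : ℤ) + 1 ≤ m := by exact_mod_cast hj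
    exact ⟨⟨by positivity, by nlinarith⟩, dvd_mul_right d j⟩

lemma twelve_mul_sum_range_choose_two {d : ℤ} (hd : 0 < d) (m : ℕ) :
    12 * ∑ j ∈ range m, ((d * m - 1 - d * j).toNat.choose 2 : ℤ)
      = m * (d ^ 2 * (m + 1) * (2 * m + 1) - 9 * d * (m + 1) + 12) := by
  induction m with
  | zero => simp
  | succ m ih =>
    rw [sum_range_succ']
    have hshift (j : ℕ) : (d * ↑(m + 1) - 1 - d * ↑(j + 1) : ℤ) = d * m - 1 - d * j := by
      push_cast; ring
    simp only [hshift]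
    have hlast := two_mul_choose_two_toNat (n := d * (m + 1) - 1) (by nlinarith)
    push_cast
    simp only [mul_zero, sub_zero]
    linear_combination ih + 6 * hlast

lemma twelve_mul_sum_filter_dvd_choose_two {q d : ℤ} (hq : 0 ≤ q + 1) (hd : 0 < d)
    (hdvd : d ∣ q + 1) :
    12 * d * ∑ i ∈ (Icc 0 q).filter (d ∣ ·), ((q - i).toNat.choose 2 : ℤ)
      = (q + 1) * (2 * q ^ 2 - 5 * q + 5 + 3 * d * q - 6 * d + d ^ 2) := by
  obtain ⟨m, hm⟩ := hdvd
  lift m to ℕ using nonneg_of_mul_nonneg_right (hm ▸ hq) hd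
  obtain rfl : q = d * m - 1 := by linarith
  rw [filter_dvd_Icc_zero_mul_sub_one hd, sum_image (fun a _ b _ h => by simpa [hd.ne'] using h)]
  linear_combination d * twelve_mul_sum_range_choose_two hd m

/-- 12·d·Σ_{0 ≤ i ≤ q, d ∤ i} C(q−i, 2) = (d−1)(q+1)(2q²−5q+5−d). -/
theorem sum_binom_not_dvd (q d : ℤ) (hq : 1 ≤ q) (hd : 0 < d) (hdvd : d ∣ q + 1) :
    12 * d * ∑ i ∈ (Finset.Icc (0 : ℤ) q).filter (fun i => ¬ d ∣ i),
        ((q - i).toNat.choose 2 : ℤ)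
      = (d - 1) * (q + 1) * (2 * q ^ 2 - 5 * q + 5 - d) := by
  have hall := twelve_mul_sum_filter_dvd_choose_two (by linarith) one_pos (one_dvd (q + 1))
  rw [filter_true_of_mem (fun i _ => one_dvd i)] at hall
  have hdvd_part := twelve_mul_sum_filter_dvd_choose_two (by linarith) hd hdvd
  rw [← sum_filter_add_sum_filter_not (Icc 0 q) (d ∣ ·)] at hall
  linear_combination d * hall - hdvd_part
end

section
/- Let q ≥ 2 be an integer and d a positive divisor of q+1. Then 24 · Σ_{i=0}^{q} Σ_{j=0}^{q} Σ_{k=0}^{q} C(s_d(i,j,k)+3, 3) = q⁶ − 2q⁵ + 4q³ − q² − 2q; in particular this sum is independent of d. (In the paper, this sum is the number N_1(T) of effective divisors aP + bQ + cR which have a basepoint at one specified point of a Hermitian triangle T = {P,Q,R} of type d.) -/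
open Finset

lemma ch3_of_neg {s : ℤ} (hs : s < 0) : ch3 s = 0 := by
  rw [ch3, Nat.choose_eq_zero_of_lt (by omega), Nat.cast_zero]

lemma six_mul_ch3 {s : ℤ} (hs : -3 ≤ s) : 6 * ch3 s = (s + 1) * (s + 2) * (s + 3) := by
  obtain hneg | hnonneg := lt_or_ge s 0
  · interval_cases s <;> rfl
  · lift s to ℕ using hnonneg
    have hchoose : 6 * (s + 3).choose 3 = (s + 1) * (s + 2) * (s + 3) := by
      rw [show 6 = (3).factorial from rfl, ← Nat.descFactorial_eq_factorial_mul_choose]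
      simp only [Nat.descFactorial_succ, Nat.descFactorial_zero, Nat.sub_zero]
      rw [show s + 3 - 2 = s + 1 by omega, show s + 3 - 1 = s + 2 by omega]
      ring
    rw [ch3, show ((s : ℤ) + 3).toNat = s + 3 by omega]
    exact_mod_cast hchoose

lemma sum_Ico_ite_lt {m r : ℤ} (a b : ℤ) (hr : 0 ≤ r) (hrm : r ≤ m) :
    ∑ k ∈ Ico 0 m, (if k < r then a else b) = r * a + (m - r) * b := by
  rw [← Ico_union_Ico_eq_Ico hr hrm, sum_union (Ico_disjoint_Ico_consecutive 0 r m),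
    sum_congr rfl fun k hk => if_pos (mem_Ico.mp hk).2,
    sum_congr rfl fun k hk => if_neg (mem_Ico.mp hk).1.not_gt,
    sum_const, sum_const, Int.card_Ico, Int.card_Ico, nsmul_eq_mul, nsmul_eq_mul,
    Int.toNat_of_nonneg (by omega), Int.toNat_of_nonneg (by omega), sub_zero]

lemma fdiv_mul_add_sub_sub_one {m r k : ℤ} (S : ℤ) (hk : 0 ≤ k) (hkm : k < m) (hr : 0 ≤ r)
    (hrm : r ≤ m) :
    (m * S + r - k - 1).fdiv m = if k < r then S else S - 1 := by
  rw [Int.fdiv_eq_ediv_of_nonneg _ (by omega), Int.ediv_eq_iff_of_pos (by omega)]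
  split_ifs <;> constructor <;> linarith

lemma sum_Ico_fdiv_mul_add_sub_sub_one (f : ℤ → ℤ) {m r : ℤ} (S : ℤ) (hr : 0 ≤ r)
    (hrm : r ≤ m) :
    ∑ k ∈ Ico 0 m, f ((m * S + r - k - 1).fdiv m) = r * f S + (m - r) * f (S - 1) := by
  rw [sum_congr rfl fun k hk => by
    rw [fdiv_mul_add_sub_sub_one S (mem_Ico.mp hk).1 (mem_Ico.mp hk).2 hr hrm, apply_ite f]]
  exact sum_Ico_ite_lt _ _ hr hrm

lemma sum_Ioc_sub_sub_one {M : Type*} [AddCommGroup M] (f : ℤ → M) {a b : ℤ} (hab : a ≤ b) :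
    ∑ j ∈ Ioc a b, (f j - f (j - 1)) = f b - f a := by
  induction b, hab using Int.leInduction with
  | base => simp
  | succ b hab ih =>
    rw [← insert_Ioc_right_eq_Ioc_add_one hab, sum_insert (by simp), ih, add_sub_cancel_right]
    abel

section Hermitian

variable {q d i j : ℤ}

lemma epsFn_mem_Icc : epsFn q d i j ∈ Icc (-1) 1 := by
  rw [mem_Icc]; unfold epsFn; split_ifs <;> omega

lemma epsFn_self : epsFn q d j j = if d ∣ j then 0 else 1 := by
  by_cases h : d ∣ j <;> simp [epsFn, h]

lemma epsFn_sub_one : epsFn q d (j - 1) j = if d ∣ j - 1 then 0 else -1 := by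
  by_cases h : d ∣ j - 1 <;> simp [epsFn, h, ne_of_gt (sub_one_lt j)]

lemma epsFn_eq_zero (hj : j ≠ 0) (hi : i ≠ j) (hi' : i ≠ j - 1) : epsFn q d i j = 0 := by
  unfold epsFn; split_ifs <;> omega

lemma sum_epsFn_mul (h : ℤ → ℤ) (hj : 1 ≤ j) (hjq : j ≤ q) :
    ∑ i ∈ Icc 0 q, epsFn q d i j * h i
      = (if d ∣ j then 0 else h j) - (if d ∣ j - 1 then 0 else h (j - 1)) := by
  rw [sum_eq_add j (j - 1) (by omega)
    (fun i _ hi => by rw [epsFn_eq_zero (by omega) hi.1 hi.2, zero_mul])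
    (fun hn => absurd (mem_Icc.mpr ⟨by omega, hjq⟩) hn)
    (fun hn => absurd (mem_Icc.mpr ⟨by omega, by omega⟩) hn), epsFn_self, epsFn_sub_one]
  split_ifs <;> ring

lemma sigmaFn_zero_nonpos : sigmaFn q d i 0 ≤ 0 := by
  have hdiag : ¬(¬d ∣ i ∧ 0 = i) := fun h => h.1 (h.2 ▸ dvd_zero d)
  rw [sigmaFn, if_pos rfl, epsFn, if_neg hdiag]
  split_ifs <;> norm_num

lemma sigmaFn_of_pos (hj : j ≠ 0) :
    sigmaFn q d i j
      = (q + 1) * (if i < j then q - 1 - j else q - 2 - j) + (j + epsFn q d i j) := by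
  rw [sigmaFn, if_neg hj]; split_ifs <;> ring

lemma sum_ch3_sFn_zero (hq : 0 ≤ q) : ∑ k ∈ Icc 0 q, ch3 (sFn q d i 0 k) = 0 := by
  refine sum_eq_zero fun k hk => ch3_of_neg ?_
  rw [sFn, Int.fdiv_eq_ediv_of_nonneg _ (by omega)]
  exact Int.ediv_neg_of_neg_of_pos (by linarith [sigmaFn_zero_nonpos (q := q) (d := d) (i := i),
    (mem_Icc.mp hk).1]) (by omega)

lemma sum_ch3_sFn_of_pos (hj : 1 ≤ j) (hjq : j ≤ q) :
    ∑ k ∈ Icc 0 q, ch3 (sFn q d i j k)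
      = (j + epsFn q d i j) * ch3 (if i < j then q - 1 - j else q - 2 - j)
        + (q + 1 - (j + epsFn q d i j)) * ch3 ((if i < j then q - 1 - j else q - 2 - j) - 1) := by
  have hε := mem_Icc.mp (epsFn_mem_Icc (q := q) (d := d) (i := i) (j := j))
  rw [← Ico_add_one_right_eq_Icc]
  simp only [sFn, sigmaFn_of_pos (show j ≠ 0 by omega)]
  exact sum_Ico_fdiv_mul_add_sub_sub_one ch3 _ (by omega) (by omega)

end Hermitian

def mainRowSum (q j : ℤ) : ℤ :=
  j ^ 2 * ch3 (q - 1 - j) + 2 * j * (q + 1 - j) * ch3 (q - 2 - j)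
    + (q + 1 - j) ^ 2 * ch3 (q - 3 - j)

def rowCorrection (q d j : ℤ) : ℤ :=
  if d ∣ j then 0 else ch3 (q - 2 - j) - ch3 (q - 3 - j)

lemma sum_sum_ch3_sFn_of_pos {q d j : ℤ} (hj : 1 ≤ j) (hjq : j ≤ q) :
    ∑ i ∈ Icc 0 q, ∑ k ∈ Icc 0 q, ch3 (sFn q d i j k)
      = mainRowSum q j + (rowCorrection q d j - rowCorrection q d (j - 1)) := by
  have hrow : ∀ i ∈ Icc 0 q, ∑ k ∈ Icc 0 q, ch3 (sFn q d i j k)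
      = (if i < j then j * ch3 (q - 1 - j) + (q + 1 - j) * ch3 (q - 2 - j)
          else j * ch3 (q - 2 - j) + (q + 1 - j) * ch3 (q - 3 - j))
        + epsFn q d i j * (if i < j then ch3 (q - 1 - j) - ch3 (q - 2 - j)
          else ch3 (q - 2 - j) - ch3 (q - 3 - j)) := by
    intro i _
    rw [sum_ch3_sFn_of_pos hj hjq]
    split_ifs
    · rw [show q - 1 - j - 1 = q - 2 - j by ring]; ring
    · rw [show q - 2 - j - 1 = q - 3 - j by ring]; ring
  rw [sum_congr rfl hrow, sum_add_distrib, sum_epsFn_mul _ hj hjq, ← Ico_add_one_right_eq_Icc,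
    sum_Ico_ite_lt _ _ (by omega) (by omega)]
  simp only [lt_irrefl, if_false, sub_one_lt, if_true, mainRowSum, rowCorrection]
  rw [show q - 2 - (j - 1) = q - 1 - j by ring, show q - 3 - (j - 1) = q - 2 - j by ring]
  ring

-- Discrete antiderivative in `j` of `24 * mainRowSum q j`, obtained from Faulhaber's formulas.
def mainRowSumPrimitive (q j : ℤ) : ℤ :=
  (4 * q ^ 5 - 10 * q ^ 4 + 2 * q ^ 3 + 12 * q ^ 2 - 2 * q - 2) * j
    + (-6 * q ^ 4 + 18 * q ^ 3 - 5 * q ^ 2 - 10 * q + 1) * j ^ 2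
    + (4 * q ^ 3 - 14 * q ^ 2 + 4 * q + 2) * j ^ 3 - (q ^ 2 - 4 * q + 1) * j ^ 4

lemma twentyFour_mul_mainRowSum {q j : ℤ} (hjq : j ≤ q) :
    24 * mainRowSum q j = mainRowSumPrimitive q j - mainRowSumPrimitive q (j - 1) := by
  have h₁ := six_mul_ch3 (show -3 ≤ q - 1 - j by omega)
  have h₂ := six_mul_ch3 (show -3 ≤ q - 2 - j by omega)
  have h₃ := six_mul_ch3 (show -3 ≤ q - 3 - j by omega)
  rw [mainRowSum, mainRowSumPrimitive, mainRowSumPrimitive]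
  linear_combination (4 * j ^ 2) * h₁ + (8 * j * (q + 1 - j)) * h₂ + (4 * (q + 1 - j) ^ 2) * h₃

lemma twentyFour_mul_sum_mainRowSum {q : ℤ} (hq : 0 ≤ q) :
    24 * ∑ j ∈ Ioc 0 q, mainRowSum q j = q ^ 6 - 2 * q ^ 5 + 4 * q ^ 3 - q ^ 2 - 2 * q := by
  rw [mul_sum, sum_congr rfl fun j hj => twentyFour_mul_mainRowSum (mem_Ioc.mp hj).2,
    sum_Ioc_sub_sub_one _ hq, mainRowSumPrimitive, mainRowSumPrimitive]
  ring

lemma rowCorrection_zero (q d : ℤ) : rowCorrection q d 0 = 0 := if_pos (dvd_zero d)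

lemma rowCorrection_self (q d : ℤ) : rowCorrection q d q = 0 := by
  rw [rowCorrection, show q - 2 - q = -2 by ring, show q - 3 - q = -3 by ring,
    ch3_of_neg (by norm_num), ch3_of_neg (by norm_num), sub_self, ite_self]

theorem one_basepoint_count_general (q d : ℤ) (hq : 2 ≤ q) :
    24 * ∑ i ∈ Finset.Icc (0 : ℤ) q, ∑ j ∈ Finset.Icc (0 : ℤ) q, ∑ k ∈ Finset.Icc (0 : ℤ) q,
        ch3 (sFn q d i j k)
      = q ^ 6 - 2 * q ^ 5 + 4 * q ^ 3 - q ^ 2 - 2 * q := by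
  have hrows : ∀ j ∈ Ioc 0 q, ∑ i ∈ Icc 0 q, ∑ k ∈ Icc 0 q, ch3 (sFn q d i j k)
      = mainRowSum q j + (rowCorrection q d j - rowCorrection q d (j - 1)) :=
    fun j hj => sum_sum_ch3_sFn_of_pos (mem_Ioc.mp hj).1 (mem_Ioc.mp hj).2
  rw [sum_comm, ← add_sum_Ioc_eq_sum_Icc (by omega),
    sum_eq_zero fun i _ => sum_ch3_sFn_zero (by omega), zero_add, sum_congr rfl hrows,
    sum_add_distrib, sum_Ioc_sub_sub_one _ (by omega), rowCorrection_self, rowCorrection_zero,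
    sub_zero, add_zero]
  exact twentyFour_mul_sum_mainRowSum (by omega)

/-- The number of effective divisors with a basepoint at one specified point:
24·N₁(T) = q⁶ − 2q⁵ + 4q³ − q² − 2q, independent of d. -/
theorem one_basepoint_count (q d : ℤ) (hq : 2 ≤ q) (hd : 0 < d) (hdvd : d ∣ q + 1) :
    24 * ∑ i ∈ Finset.Icc (0 : ℤ) q, ∑ j ∈ Finset.Icc (0 : ℤ) q, ∑ k ∈ Finset.Icc (0 : ℤ) q,
        ch3 (sFn q d i j k)
      = q ^ 6 - 2 * q ^ 5 + 4 * q ^ 3 - q ^ 2 - 2 * q :=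
  one_basepoint_count_general q d hq
end
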